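/- arXiv:0710.1072 — 2 statements merged into one kernel-verified Lean document; each statement's English description precedes it below -/
import Mathlib

section
/- For all u₁, u₂, v ∈ ℂ such that θ is nonzero at each of v, u₁−v, u₂+v, u₁−u₂−v and u₂−u₁+v, the combination f(u₁,u₂,v) = E₁(v) − E₁(u₁−u₂−v) + E₁(u₁−v) − E₁(u₂+v) admits the closed product formula f(u₁,u₂,v) = θ'(0)·θ(u₁)·θ(u₂)·θ(u₂−u₁+2v) / ( θ(u₁−v)·θ(u₂+v)·θ(u₂−u₁+v)·θ(v) ). -/
/-!
Write `θ(z) = e^{-πiz} ϑ(z)`, where `ϑ = oddTheta` is odd (`θ` itself is not: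
`θ(-z) = -e^{2πiz} θ(z)`). Then `E₁ = ϑ'/ϑ - πi`, and the constants `πi` cancel in `f`.

Multiplying the two series and regrouping the indices by parity gives
`ϑ(x+y) ϑ(x-y) = (A(x) B(y) - B(x) A(y)) / 2` with `A = jacobiTheta₂ · (τ/2)` and
`B = A(· + 1/2)`, so the products `ϑ(t+w) ϑ(t-w)` are the values of an alternating bilinear
form, and the Plücker relation gives the three-term identity
`ϑ(x+y)ϑ(x-y)ϑ(t+z)ϑ(t-z) - ϑ(x+z)ϑ(x-z)ϑ(t+y)ϑ(t-y) + ϑ(y+z)ϑ(y-z)ϑ(t+x)ϑ(t-x) = 0`.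
Differentiating it in `t` at `t = x`, where `ϑ(0) = 0` kills one term, and dividing yields, for
`a + b = c + d` and `L = ϑ'/ϑ`,
`L(a) + L(b) - L(c) - L(d) = ϑ'(0) ϑ(a+b) ϑ(a-c) ϑ(a-d) / (ϑ(a) ϑ(b) ϑ(c) ϑ(d))`.
The theorem is the case `a = v`, `b = u₁ - v`, `c = u₂ + v`, `d = u₁ - u₂ - v`.
-/

open Complex

noncomputable section

/-- The odd Jacobi theta function
`θ(z) = q^{1/8} · Σ_{n ∈ ℤ} (−1)^n exp(2πi( n(n+1)τ/2 + n z ))`, `q = exp(2πiτ)`. -/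
def theta (τ z : ℂ) : ℂ :=
  Complex.exp (2 * (Real.pi : ℂ) * I * τ / 8) *
    ∑' n : ℤ, (-1 : ℂ) ^ n *
      Complex.exp (2 * (Real.pi : ℂ) * I * ((n : ℂ) * ((n : ℂ) + 1) * τ / 2 + (n : ℂ) * z))

/-- The derivative `θ'` of `θ` in `z`. -/
def theta' (τ : ℂ) : ℂ → ℂ := deriv (theta τ)

/-- `E₁(z) = θ'(z)/θ(z)`. -/
def E₁ (τ z : ℂ) : ℂ := theta' τ z / theta τ z

/-- `E₂(z) = −E₁'(z)`. -/
def E₂ (τ z : ℂ) : ℂ := - deriv (fun w => E₁ τ w) z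

/-- The Kronecker function `φ(u,z) = θ(u+z)·θ'(0)/(θ(u)·θ(z))`. -/
def phi (τ u z : ℂ) : ℂ := theta τ (u + z) * theta' τ 0 / (theta τ u * theta τ z)

open scoped Real

def oddThetaTerm (τ : ℂ) (n : ℤ) (z : ℂ) : ℂ :=
  (-1) ^ n * cexp (π * I * τ * (n + 1 / 2) ^ 2 + 2 * π * I * (n + 1 / 2) * z)

def oddTheta (τ z : ℂ) : ℂ := ∑' n : ℤ, oddThetaTerm τ n z

theorem neg_one_zpow_eq_of_even_sub {α : Type*} [DivisionRing α] {a b : ℤ} (h : Even (a - b)) :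
    (-1 : α) ^ a = (-1) ^ b := by
  rw [← sub_add_cancel a b, zpow_add₀ (neg_ne_zero.2 one_ne_zero), h.neg_one_zpow, one_mul]

theorem HasSum.mul_of_finiteDimensional {ι κ R : Type*} [NormedRing R] [NormedAlgebra ℝ R]
    [FiniteDimensional ℝ R] {f : ι → R} {g : κ → R} {s t : R} (hf : HasSum f s)
    (hg : HasSum g t) : HasSum (fun p : ι × κ => f p.1 * g p.2) (s * t) :=
  hf.mul hg (summable_mul_of_summable_norm (summable_norm_iff.2 hf.summable)
    (summable_norm_iff.2 hg.summable))

theorem neg_one_zpow_eq_cexp (n : ℤ) : (-1 : ℂ) ^ n = cexp (n * (π * I)) := by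
  rw [exp_int_mul, exp_pi_mul_I]

theorem jacobiTheta₂_term_add_half (n : ℤ) (z τ : ℂ) :
    jacobiTheta₂_term n (z + 1 / 2) τ = (-1) ^ n * jacobiTheta₂_term n z τ := by
  rw [jacobiTheta₂_term, jacobiTheta₂_term, neg_one_zpow_eq_cexp, ← exp_add]
  ring_nf

section OddTheta

variable {τ : ℂ}

theorem oddThetaTerm_eq (τ : ℂ) (n : ℤ) (z : ℂ) :
    oddThetaTerm τ n z =
      cexp (π * I * τ / 4 + π * I * z) * jacobiTheta₂_term n (z + (τ + 1) / 2) τ := by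
  rw [oddThetaTerm, jacobiTheta₂_term, neg_one_zpow_eq_cexp, ← exp_add, ← exp_add]
  ring_nf

theorem oddTheta_eq (τ z : ℂ) :
    oddTheta τ z = cexp (π * I * τ / 4 + π * I * z) * jacobiTheta₂ (z + (τ + 1) / 2) τ := by
  simp only [oddTheta, oddThetaTerm_eq, tsum_mul_left, jacobiTheta₂]

theorem hasSum_oddThetaTerm (hτ : 0 < τ.im) (z : ℂ) :
    HasSum (oddThetaTerm τ · z) (oddTheta τ z) := by
  refine Summable.hasSum ?_
  simp only [oddThetaTerm_eq]
  exact ((summable_jacobiTheta₂_term_iff _ _).2 hτ).mul_left _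

theorem differentiable_oddTheta (hτ : 0 < τ.im) : Differentiable ℂ (oddTheta τ) := by
  intro z
  rw [funext (oddTheta_eq τ)]
  exact (by fun_prop : DifferentiableAt ℂ (fun w => cexp (π * I * τ / 4 + π * I * w)) z).mul
    ((differentiableAt_jacobiTheta₂_fst _ hτ).comp z (by fun_prop))

theorem oddThetaTerm_neg (τ : ℂ) (n : ℤ) (z : ℂ) :
    oddThetaTerm τ (-n - 1) (-z) = -oddThetaTerm τ n z := by
  have hsign : (-1 : ℂ) ^ (-n - 1) = -(-1) ^ n := by
    rw [neg_one_zpow_eq_of_even_sub (b := n + 1) ⟨-n - 1, by ring⟩,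
      zpow_add_one₀ (by norm_num)]
    ring
  rw [oddThetaTerm, oddThetaTerm, hsign]
  push_cast
  ring_nf

theorem oddTheta_neg (τ z : ℂ) : oddTheta τ (-z) = -oddTheta τ z := by
  rw [oddTheta, oddTheta, ← tsum_neg, ← ((Equiv.neg ℤ).trans (Equiv.subRight 1)).tsum_eq]
  exact tsum_congr fun n => oddThetaTerm_neg τ n z

theorem oddTheta_zero (τ : ℂ) : oddTheta τ 0 = 0 :=
  CharZero.eq_neg_self_iff.1 (by simpa using oddTheta_neg τ 0)

theorem theta_eq_exp_mul_oddTheta (τ z : ℂ) :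
    theta τ z = cexp (-π * I * z) * oddTheta τ z := by
  rw [theta, oddTheta, ← tsum_mul_left, ← tsum_mul_left]
  refine tsum_congr fun n => ?_
  rw [oddThetaTerm, mul_left_comm, ← exp_add, mul_left_comm, ← exp_add]
  ring_nf

end OddTheta

section ProductFormula

variable {τ : ℂ}

theorem oddThetaTerm_add_mul_oddThetaTerm_sub (τ x y : ℂ) (n m : ℤ) :
    oddThetaTerm τ n (x + y) * oddThetaTerm τ m (x - y) =
      (-1) ^ (n + m) *
        (jacobiTheta₂_term (n + m + 1) x (τ / 2) * jacobiTheta₂_term (n - m) y (τ / 2)) := by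
  rw [oddThetaTerm, oddThetaTerm, jacobiTheta₂_term, jacobiTheta₂_term,
    zpow_add₀ (neg_ne_zero.2 one_ne_zero), mul_mul_mul_comm, ← exp_add, ← exp_add]
  push_cast
  ring_nf

theorem oddTheta_add_mul_oddTheta_sub (hτ : 0 < τ.im) (x y : ℂ) :
    oddTheta τ (x + y) * oddTheta τ (x - y) =
      (jacobiTheta₂ x (τ / 2) * jacobiTheta₂ (y + 1 / 2) (τ / 2) -
        jacobiTheta₂ (x + 1 / 2) (τ / 2) * jacobiTheta₂ y (τ / 2)) / 2 := by
  have hτ' : 0 < (τ / 2).im := by simpa using hτ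
  have hϑ (w : ℂ) := hasSum_jacobiTheta₂_term w hτ'
  have hsum : HasSum (fun p : ℤ × ℤ => ((-1) ^ p.2 - (-1) ^ p.1) / 2 *
      (jacobiTheta₂_term p.1 x (τ / 2) * jacobiTheta₂_term p.2 y (τ / 2)))
      ((jacobiTheta₂ x (τ / 2) * jacobiTheta₂ (y + 1 / 2) (τ / 2) -
        jacobiTheta₂ (x + 1 / 2) (τ / 2) * jacobiTheta₂ y (τ / 2)) / 2) := by
    refine (((hϑ x).mul_of_finiteDimensional (hϑ (y + 1 / 2))).sub
      ((hϑ (x + 1 / 2)).mul_of_finiteDimensional (hϑ y))).div_const 2 |>.congr_fun fun p => ?_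
    simp only [jacobiTheta₂_term_add_half]
    ring
  -- Only pairs `(N, M)` of opposite parity contribute; they are exactly the `(n + m + 1, n - m)`.
  let φ : ℤ × ℤ → ℤ × ℤ := fun p => (p.1 + p.2 + 1, p.1 - p.2)
  have hφ : φ.Injective := fun p q h => by
    simp only [φ, Prod.mk.injEq] at h
    ext <;> omega
  have hvanish : ∀ p ∉ Set.range φ, ((-1 : ℂ) ^ p.2 - (-1) ^ p.1) / 2 *
      (jacobiTheta₂_term p.1 x (τ / 2) * jacobiTheta₂_term p.2 y (τ / 2)) = 0 := by
    rintro ⟨N, M⟩ hp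
    obtain ⟨k, hk⟩ : Even (M - N) := by
      by_contra hodd
      obtain ⟨k, hk⟩ := Int.not_even_iff_odd.1 hodd
      exact hp ⟨(N + k, -k - 1), by simp only [φ, Prod.mk.injEq]; omega⟩
    rw [neg_one_zpow_eq_of_even_sub ⟨k, hk⟩, sub_self, zero_div, zero_mul]
  refine ((hasSum_oddThetaTerm hτ _).mul_of_finiteDimensional
    (hasSum_oddThetaTerm hτ _)).unique ?_
  refine ((hφ.hasSum_iff hvanish).2 hsum).congr_fun fun p => ?_
  have hsign : ((-1 : ℂ) ^ (p.1 - p.2) - (-1) ^ (p.1 + p.2 + 1)) / 2 = (-1) ^ (p.1 + p.2) := by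
    rw [neg_one_zpow_eq_of_even_sub (b := p.1 + p.2) ⟨-p.2, by ring⟩,
      zpow_add_one₀ (by norm_num)]
    ring
  simp only [Function.comp_apply, φ, hsign, oddThetaTerm_add_mul_oddThetaTerm_sub]

theorem oddTheta_three_term (hτ : 0 < τ.im) (x y z t : ℂ) :
    oddTheta τ (x + y) * oddTheta τ (x - y) * (oddTheta τ (t + z) * oddTheta τ (t - z)) -
      oddTheta τ (x + z) * oddTheta τ (x - z) * (oddTheta τ (t + y) * oddTheta τ (t - y)) +
      oddTheta τ (y + z) * oddTheta τ (y - z) * (oddTheta τ (t + x) * oddTheta τ (t - x)) =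
    0 := by
  simp only [oddTheta_add_mul_oddTheta_sub hτ]
  ring

end ProductFormula

section Derivative

variable {τ : ℂ}

theorem hasDerivAt_oddTheta_add_mul_oddTheta_sub (hτ : 0 < τ.im) (w t : ℂ) :
    HasDerivAt (fun s => oddTheta τ (s + w) * oddTheta τ (s - w))
      (deriv (oddTheta τ) (t + w) * oddTheta τ (t - w) +
        oddTheta τ (t + w) * deriv (oddTheta τ) (t - w)) t :=
  ((differentiable_oddTheta hτ _).hasDerivAt.comp_add_const t w).mul
    ((differentiable_oddTheta hτ _).hasDerivAt.comp_sub_const t w)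

theorem oddTheta_three_term_deriv (hτ : 0 < τ.im) (x y z : ℂ) :
    oddTheta τ (x + y) * oddTheta τ (x - y) *
        (deriv (oddTheta τ) (x + z) * oddTheta τ (x - z) +
          oddTheta τ (x + z) * deriv (oddTheta τ) (x - z)) -
      oddTheta τ (x + z) * oddTheta τ (x - z) *
        (deriv (oddTheta τ) (x + y) * oddTheta τ (x - y) +
          oddTheta τ (x + y) * deriv (oddTheta τ) (x - y)) +
      oddTheta τ (y + z) * oddTheta τ (y - z) * (oddTheta τ (x + x) * deriv (oddTheta τ) 0) =
    0 := by
  have hD := (((hasDerivAt_oddTheta_add_mul_oddTheta_sub hτ z x).const_mul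
    (oddTheta τ (x + y) * oddTheta τ (x - y))).sub
    ((hasDerivAt_oddTheta_add_mul_oddTheta_sub hτ y x).const_mul
      (oddTheta τ (x + z) * oddTheta τ (x - z)))).add
    ((hasDerivAt_oddTheta_add_mul_oddTheta_sub hτ x x).const_mul
      (oddTheta τ (y + z) * oddTheta τ (y - z)))
  have h := hD.unique ((hasDerivAt_const x 0).congr_of_eventuallyEq
    (.of_forall (oddTheta_three_term hτ x y z)))
  rw [sub_self, oddTheta_zero] at h
  linear_combination h

theorem logDeriv_oddTheta_add_add_sub_sub (hτ : 0 < τ.im) {a b c d : ℂ} (h : a + b = c + d)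
    (ha : oddTheta τ a ≠ 0) (hb : oddTheta τ b ≠ 0) (hc : oddTheta τ c ≠ 0)
    (hd : oddTheta τ d ≠ 0) :
    logDeriv (oddTheta τ) a + logDeriv (oddTheta τ) b - logDeriv (oddTheta τ) c -
        logDeriv (oddTheta τ) d =
      deriv (oddTheta τ) 0 * oddTheta τ (a + b) * oddTheta τ (a - c) * oddTheta τ (a - d) /
        (oddTheta τ a * oddTheta τ b * oddTheta τ c * oddTheta τ d) := by
  have key := oddTheta_three_term_deriv hτ ((a + b) / 2) ((a - b) / 2) ((c - d) / 2)
  rw [show (a + b) / 2 + (a - b) / 2 = a by ring, show (a + b) / 2 - (a - b) / 2 = b by ring,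
    show (a + b) / 2 + (c - d) / 2 = c by linear_combination h / 2,
    show (a + b) / 2 - (c - d) / 2 = d by linear_combination h / 2,
    show (a - b) / 2 + (c - d) / 2 = a - d by linear_combination -h / 2,
    show (a - b) / 2 - (c - d) / 2 = a - c by linear_combination -h / 2,
    show (a + b) / 2 + (a + b) / 2 = a + b by ring] at key
  simp only [logDeriv_apply]
  field_simp
  linear_combination -key

end Derivative

section Theta

variable {τ : ℂ}

theorem oddTheta_ne_zero_of_theta_ne_zero {z : ℂ} (h : theta τ z ≠ 0) : oddTheta τ z ≠ 0 :=
  right_ne_zero_of_mul (theta_eq_exp_mul_oddTheta τ z ▸ h)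

theorem E₁_eq_logDeriv_oddTheta_sub (hτ : 0 < τ.im) {z : ℂ} (h : theta τ z ≠ 0) :
    E₁ τ z = logDeriv (oddTheta τ) z - π * I := by
  rw [E₁, theta', ← logDeriv_apply, funext (theta_eq_exp_mul_oddTheta τ),
    logDeriv_mul (f := fun w => cexp (-π * I * w)) z (exp_ne_zero _)
      (oddTheta_ne_zero_of_theta_ne_zero h) (by fun_prop) (differentiable_oddTheta hτ z),
    logDeriv_apply (fun w => cexp _),
    (((hasDerivAt_id' z).const_mul (-π * I)).cexp).deriv]
  field_simp
  ring

theorem theta'_zero (hτ : 0 < τ.im) : theta' τ 0 = deriv (oddTheta τ) 0 := by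
  rw [theta', funext (theta_eq_exp_mul_oddTheta τ),
    deriv_fun_mul (by fun_prop) (differentiable_oddTheta hτ 0), oddTheta_zero]
  simp

theorem theta_ratio_eq_oddTheta_ratio (τ k p q r s t u w : ℂ) (h : p + q + r = s + t + u + w) :
    k * theta τ p * theta τ q * theta τ r / (theta τ s * theta τ t * theta τ u * theta τ w) =
      k * oddTheta τ p * oddTheta τ q * oddTheta τ r /
        (oddTheta τ s * oddTheta τ t * oddTheta τ u * oddTheta τ w) := by
  simp only [theta_eq_exp_mul_oddTheta]
  have hexp : cexp (-π * I * p) * cexp (-π * I * q) * cexp (-π * I * r) =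
      cexp (-π * I * s) * cexp (-π * I * t) * cexp (-π * I * u) * cexp (-π * I * w) := by
    simp only [← exp_add]
    congr 1
    linear_combination -π * I * h
  calc _ = cexp (-π * I * p) * cexp (-π * I * q) * cexp (-π * I * r) *
        (k * oddTheta τ p * oddTheta τ q * oddTheta τ r) /
        (cexp (-π * I * s) * cexp (-π * I * t) * cexp (-π * I * u) * cexp (-π * I * w) *
          (oddTheta τ s * oddTheta τ t * oddTheta τ u * oddTheta τ w)) := by ring
    _ = _ := by rw [hexp, mul_div_mul_left _ _ (by simp [exp_ne_zero])]

end Theta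

theorem f_product_formula_general (τ : ℂ) (hτ : 0 < τ.im) (u₁ u₂ v : ℂ)
    (h1 : theta τ v ≠ 0) (h2 : theta τ (u₁ - v) ≠ 0) (h3 : theta τ (u₂ + v) ≠ 0)
    (h4 : theta τ (u₁ - u₂ - v) ≠ 0) :
    E₁ τ v - E₁ τ (u₁ - u₂ - v) + E₁ τ (u₁ - v) - E₁ τ (u₂ + v) =
      theta' τ 0 * theta τ u₁ * theta τ u₂ * theta τ (u₂ - u₁ + 2 * v) /
        (theta τ (u₁ - v) * theta τ (u₂ + v) * theta τ (u₂ - u₁ + v) * theta τ v) := by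
  have key := logDeriv_oddTheta_add_add_sub_sub hτ (a := v) (b := u₁ - v) (c := u₂ + v)
    (d := u₁ - u₂ - v) (by ring) (oddTheta_ne_zero_of_theta_ne_zero h1)
    (oddTheta_ne_zero_of_theta_ne_zero h2) (oddTheta_ne_zero_of_theta_ne_zero h3)
    (oddTheta_ne_zero_of_theta_ne_zero h4)
  rw [show v + (u₁ - v) = u₁ by ring, show v - (u₂ + v) = -u₂ by ring,
    show v - (u₁ - u₂ - v) = u₂ - u₁ + 2 * v by ring, oddTheta_neg] at key
  rw [E₁_eq_logDeriv_oddTheta_sub hτ h1, E₁_eq_logDeriv_oddTheta_sub hτ h2,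
    E₁_eq_logDeriv_oddTheta_sub hτ h3, E₁_eq_logDeriv_oddTheta_sub hτ h4, theta'_zero hτ,
    theta_ratio_eq_oddTheta_ratio τ _ u₁ u₂ (u₂ - u₁ + 2 * v) (u₁ - v) (u₂ + v)
      (u₂ - u₁ + v) v (by ring),
    show u₂ - u₁ + v = -(u₁ - u₂ - v) by ring, oddTheta_neg]
  linear_combination key

/-- The combination `f(u₁,u₂,v) = E₁(v) − E₁(u₁−u₂−v) + E₁(u₁−v) − E₁(u₂+v)` admits the
closed product formula
`f(u₁,u₂,v) = θ'(0)·θ(u₁)·θ(u₂)·θ(u₂−u₁+2v) / ( θ(u₁−v)·θ(u₂+v)·θ(u₂−u₁+v)·θ(v) )`. -/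
theorem f_product_formula (τ : ℂ) (hτ : 0 < τ.im) (u₁ u₂ v : ℂ)
    (h1 : theta τ v ≠ 0) (h2 : theta τ (u₁ - v) ≠ 0) (h3 : theta τ (u₂ + v) ≠ 0)
    (h4 : theta τ (u₁ - u₂ - v) ≠ 0) (h5 : theta τ (u₂ - u₁ + v) ≠ 0) :
    E₁ τ v - E₁ τ (u₁ - u₂ - v) + E₁ τ (u₁ - v) - E₁ τ (u₂ + v) =
      theta' τ 0 * theta τ u₁ * theta τ u₂ * theta τ (u₂ - u₁ + 2 * v) /
        (theta τ (u₁ - v) * theta τ (u₂ + v) * theta τ (u₂ - u₁ + v) * theta τ v) :=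
  f_product_formula_general τ hτ u₁ u₂ v h1 h2 h3 h4

end
end

section
/- For all u, η, z₁, z₂ ∈ ℂ such that θ is nonzero at each of u, −u, η, u+η, z₁, z₂, z₁−z₂, z₁+η and all sums appearing below, one has φ(η+u, z₁−z₂)·φ(η, z₂)·φ(u, η) = φ(u, z₁−z₂)·φ(η, z₁)·φ(u, η) + φ(−u, z₂)·φ(u, z₁+η)·φ(η, z₁). -/
open Complex

noncomputable section

/-!
Splitting the double series for `θ(x)θ(y)` according to the parity of `m + n` expresses the
product through theta series with parameter `2τ`; for `e(a) = exp(2πia)` this makes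
`e(a)θ(a+b)θ(a−b)` a `2 × 2` determinant `X(a)Y(b) − Y(a)X(b)`. The Plücker relation between
such determinants is the three-term addition formula for `θ`; at
`a = η + (u+z₁)/2, b = (u+z₁)/2 − z₂, c = (u+z₁)/2, d = (u−z₁)/2`, and with
`θ(−z) = −e(z)θ(z)`, it becomes the claimed identity once the denominators of `φ` are cleared.
-/

open scoped Real

theorem HasSum.int_prod_even_add_odd {M : Type*} [AddCommMonoid M] [TopologicalSpace M]
    [ContinuousAdd M] {f : ℤ × ℤ → M} {a b : M}
    (he : HasSum (fun p : ℤ × ℤ ↦ f (p.1 + p.2, p.1 - p.2)) a)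
    (ho : HasSum (fun p : ℤ × ℤ ↦ f (p.1 + p.2 + 1, p.1 - p.2)) b) : HasSum f (a + b) := by
  set ie : ℤ × ℤ → ℤ × ℤ := fun p ↦ (p.1 + p.2, p.1 - p.2)
  set io : ℤ × ℤ → ℤ × ℤ := fun p ↦ (p.1 + p.2 + 1, p.1 - p.2)
  have hie : ie.Injective := fun p q h ↦ by simp only [ie, Prod.ext_iff] at h ⊢; omega
  have hio : io.Injective := fun p q h ↦ by simp only [io, Prod.ext_iff] at h ⊢; omega
  have hcompl : Set.range io = (Set.range ie)ᶜ := by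
    ext ⟨m, n⟩
    simp only [Set.mem_range, Set.mem_compl_iff, ie, io, Prod.ext_iff, Prod.exists]
    constructor
    · rintro ⟨a, b, h₁, h₂⟩ ⟨c, d, h₃, h₄⟩
      omega
    · intro h
      by_cases hpar : (m + n) % 2 = 0
      · exact absurd ⟨(m + n) / 2, (m - n) / 2, by omega, by omega⟩ h
      · exact ⟨(m + n - 1) / 2, (m - n - 1) / 2, by omega, by omega⟩
  refine (hie.hasSum_range_iff.2 he).add_isCompl ?_ (hio.hasSum_range_iff.2 ho)
  rw [hcompl]
  exact isCompl_compl

lemma summable_norm_jacobiTheta₂_term (z : ℂ) {τ : ℂ} (hτ : 0 < τ.im) :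
    Summable fun n : ℤ ↦ ‖jacobiTheta₂_term n z τ‖ :=
  summable_norm_iff.mpr ((summable_jacobiTheta₂_term_iff z τ).mpr hτ)

lemma jacobiTheta₂_term_add_mul_sub (m n : ℤ) (x y τ : ℂ) :
    jacobiTheta₂_term (m + n) x τ * jacobiTheta₂_term (m - n) y τ =
      jacobiTheta₂_term m (x + y) (2 * τ) * jacobiTheta₂_term n (x - y) (2 * τ) := by
  simp only [jacobiTheta₂_term, ← Complex.exp_add]
  congr 1
  push_cast
  ring

lemma jacobiTheta₂_term_add_add_one_mul_sub (m n : ℤ) (x y τ : ℂ) :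
    jacobiTheta₂_term (m + n + 1) x τ * jacobiTheta₂_term (m - n) y τ =
      cexp (π * I * (τ + 2 * x)) *
        (jacobiTheta₂_term m (x + y + τ) (2 * τ) * jacobiTheta₂_term n (x - y + τ) (2 * τ)) := by
  simp only [jacobiTheta₂_term, ← Complex.exp_add]
  congr 1
  push_cast
  ring

lemma hasSum_jacobiTheta₂_term_mul (s t : ℂ) {τ : ℂ} (hτ : 0 < τ.im) :
    HasSum (fun p : ℤ × ℤ ↦ jacobiTheta₂_term p.1 s τ * jacobiTheta₂_term p.2 t τ)
      (jacobiTheta₂ s τ * jacobiTheta₂ t τ) := by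
  apply (hasSum_jacobiTheta₂_term s hτ).mul (hasSum_jacobiTheta₂_term t hτ)
  exact summable_mul_of_summable_norm (f := (jacobiTheta₂_term · s τ))
    (g := (jacobiTheta₂_term · t τ)) (summable_norm_jacobiTheta₂_term s hτ)
    (summable_norm_jacobiTheta₂_term t hτ)

theorem jacobiTheta₂_mul_jacobiTheta₂ (x y : ℂ) {τ : ℂ} (hτ : 0 < τ.im) :
    jacobiTheta₂ x τ * jacobiTheta₂ y τ =
      jacobiTheta₂ (x + y) (2 * τ) * jacobiTheta₂ (x - y) (2 * τ) +
        cexp (π * I * (τ + 2 * x)) *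
          (jacobiTheta₂ (x + y + τ) (2 * τ) * jacobiTheta₂ (x - y + τ) (2 * τ)) := by
  have h2τ : 0 < (2 * τ).im := by simpa using hτ
  refine (hasSum_jacobiTheta₂_term_mul x y hτ).unique (HasSum.int_prod_even_add_odd ?_ ?_)
  · simpa only [jacobiTheta₂_term_add_mul_sub] using
      hasSum_jacobiTheta₂_term_mul (x + y) (x - y) h2τ
  · simpa only [jacobiTheta₂_term_add_add_one_mul_sub] using
      (hasSum_jacobiTheta₂_term_mul (x + y + τ) (x - y + τ) h2τ).mul_left
        (cexp (π * I * (τ + 2 * x)))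

lemma theta_eq_jacobiTheta₂ (τ z : ℂ) :
    theta τ z = cexp (π * I * τ / 4) * jacobiTheta₂ (z + τ / 2 + 1 / 2) τ := by
  rw [theta, jacobiTheta₂]
  congr 1
  · ring_nf
  · refine tsum_congr fun n ↦ ?_
    rw [jacobiTheta₂_term, show (-1 : ℂ) ^ n = cexp (n * (π * I)) by
      rw [exp_int_mul, exp_pi_mul_I], ← Complex.exp_add]
    congr 1
    ring

lemma theta_neg (τ z : ℂ) : theta τ (-z) = -(cexp (2 * π * I * z) * theta τ z) := by
  set v := z - τ / 2 + 1 / 2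
  have h_neg : theta τ (-z) = cexp (π * I * τ / 4) * jacobiTheta₂ v τ := by
    rw [theta_eq_jacobiTheta₂, show -z + τ / 2 + 1 / 2 = -(v - 1) by ring,
      jacobiTheta₂_neg_left, ← jacobiTheta₂_add_left, sub_add_cancel]
  have h_pos : theta τ z =
      cexp (π * I * τ / 4) * (cexp (-π * I * (τ + 2 * v)) * jacobiTheta₂ v τ) := by
    rw [theta_eq_jacobiTheta₂, show z + τ / 2 + 1 / 2 = v + τ by ring, jacobiTheta₂_add_left']
  have hexp : cexp (2 * π * I * z) * cexp (-π * I * (τ + 2 * v)) = -1 := by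
    rw [← Complex.exp_add, show 2 * π * I * z + -π * I * (τ + 2 * v) = -(π * I) by ring,
      Complex.exp_neg, exp_pi_mul_I]
    norm_num
  rw [h_neg, h_pos]
  linear_combination cexp (π * I * τ / 4) * jacobiTheta₂ v τ * hexp

theorem exists_theta_mul_theta_eq_det {τ : ℂ} (hτ : 0 < τ.im) :
    ∃ X Y : ℂ → ℂ, ∀ a b : ℂ,
      cexp (2 * π * I * a) * (theta τ (a + b) * theta τ (a - b)) = X a * Y b - Y a * X b := by
  set c := cexp (π * I * τ / 4)
  refine ⟨fun a ↦ c * cexp (2 * π * I * a) * jacobiTheta₂ (2 * a + τ) (2 * τ),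
    fun a ↦ c * jacobiTheta₂ (2 * a) (2 * τ), fun a b ↦ ?_⟩
  have hprod := jacobiTheta₂_mul_jacobiTheta₂ (a + b + τ / 2 + 1 / 2) (a - b + τ / 2 + 1 / 2) hτ
  rw [show a + b + τ / 2 + 1 / 2 + (a - b + τ / 2 + 1 / 2) = 2 * a + τ + 1 by ring,
    show a + b + τ / 2 + 1 / 2 - (a - b + τ / 2 + 1 / 2) = 2 * b by ring,
    show 2 * a + τ + 1 + τ = 2 * a + 2 * τ + 1 by ring, jacobiTheta₂_add_left,
    jacobiTheta₂_add_left, jacobiTheta₂_add_left'] at hprod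
  have hexp : cexp (2 * π * I * a) * (cexp (π * I * (τ + 2 * (a + b + τ / 2 + 1 / 2))) *
      cexp (-π * I * (2 * τ + 2 * (2 * a)))) = -cexp (2 * π * I * b) := by
    rw [← Complex.exp_add, ← Complex.exp_add, ← neg_one_mul (cexp _), ← exp_pi_mul_I,
      ← Complex.exp_add]
    congr 1
    ring
  rw [theta_eq_jacobiTheta₂, theta_eq_jacobiTheta₂]
  linear_combination c ^ 2 * cexp (2 * π * I * a) * hprod +
    c ^ 2 * jacobiTheta₂ (2 * a) (2 * τ) * jacobiTheta₂ (2 * b + τ) (2 * τ) * hexp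

theorem theta_three_term {τ : ℂ} (hτ : 0 < τ.im) (a b c d : ℂ) :
    cexp (2 * π * I * c) *
        (theta τ (a + b) * theta τ (a - b) * (theta τ (c + d) * theta τ (c - d))) =
      cexp (2 * π * I * b) *
        (theta τ (a + c) * theta τ (a - c) * (theta τ (b + d) * theta τ (b - d)) -
          theta τ (a + d) * theta τ (a - d) * (theta τ (b + c) * theta τ (b - c))) := by
  obtain ⟨X, Y, hXY⟩ := exists_theta_mul_theta_eq_det hτ
  set e : ℂ → ℂ := fun z ↦ cexp (2 * π * I * z)
  refine mul_left_cancel₀ (Complex.exp_ne_zero (2 * π * I * a)) ?_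
  calc e a * (e c * (theta τ (a + b) * theta τ (a - b) * (theta τ (c + d) * theta τ (c - d))))
      = (X a * Y b - Y a * X b) * (X c * Y d - Y c * X d) := by
        rw [← hXY, ← hXY]; ring
    -- the Plücker relation between the `2 × 2` minors of the vectors `(X t, Y t)`
    _ = (X a * Y c - Y a * X c) * (X b * Y d - Y b * X d) -
          (X a * Y d - Y a * X d) * (X b * Y c - Y b * X c) := by ring
    _ = _ := by rw [← hXY, ← hXY, ← hXY, ← hXY]; ring

theorem theta_trisecant {τ : ℂ} (hτ : 0 < τ.im) (u η z₁ z₂ : ℂ) :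
    cexp (2 * π * I * z₂) *
        (theta τ (η + u + (z₁ - z₂)) * theta τ (η + z₂) * theta τ u * theta τ z₁) =
      cexp (2 * π * I * z₂) *
          (theta τ (u + (z₁ - z₂)) * theta τ (η + u) * theta τ z₂ * theta τ (η + z₁)) +
        theta τ (u - z₂) * theta τ (u + (η + z₁)) * theta τ η * theta τ (z₁ - z₂) := by
  have h := theta_three_term hτ (η + (u + z₁) / 2) ((u + z₁) / 2 - z₂) ((u + z₁) / 2)
    ((u - z₁) / 2)
  rw [show (u + z₁) / 2 - z₂ - (u + z₁) / 2 = -z₂ by ring, theta_neg] at h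
  ring_nf at h ⊢
  simp only [Complex.exp_add, Complex.exp_sub] at h
  field_simp at h
  linear_combination h

theorem phi_three_factor_identity_general (τ : ℂ) (hτ : 0 < τ.im) (u η z₁ z₂ : ℂ)
    (hu : theta τ u ≠ 0) (hη : theta τ η ≠ 0) (hηu : theta τ (η + u) ≠ 0)
    (hz₁ : theta τ z₁ ≠ 0) (hz₂ : theta τ z₂ ≠ 0) (hz₁₂ : theta τ (z₁ - z₂) ≠ 0)
    (h1 : theta τ (z₁ + η) ≠ 0) :
    phi τ (η + u) (z₁ - z₂) * phi τ η z₂ * phi τ u η =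
      phi τ u (z₁ - z₂) * phi τ η z₁ * phi τ u η +
        phi τ (-u) z₂ * phi τ u (z₁ + η) * phi τ η z₁ := by
  have h := theta_trisecant hτ u η z₁ z₂
  simp only [phi]
  rw [show -u + z₂ = -(u - z₂) by ring, theta_neg, theta_neg, mul_sub (2 * π * I) u z₂,
    Complex.exp_sub, add_comm u η, add_comm z₁ η] at *
  have he : cexp (2 * π * I * z₂) ≠ 0 := exp_ne_zero _
  generalize cexp (2 * π * I * z₂) = e at he h ⊢
  field_simp
  linear_combination theta' τ 0 ^ 3 * h

/-- `φ(η+u, z₁−z₂)·φ(η, z₂)·φ(u, η)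
  = φ(u, z₁−z₂)·φ(η, z₁)·φ(u, η) + φ(−u, z₂)·φ(u, z₁+η)·φ(η, z₁)`. -/
theorem phi_three_factor_identity (τ : ℂ) (hτ : 0 < τ.im) (u η z₁ z₂ : ℂ)
    (hu : theta τ u ≠ 0) (hη : theta τ η ≠ 0) (hηu : theta τ (η + u) ≠ 0)
    (hz₁ : theta τ z₁ ≠ 0) (hz₂ : theta τ z₂ ≠ 0) (hz₁₂ : theta τ (z₁ - z₂) ≠ 0)
    (h1 : theta τ (z₁ + η) ≠ 0) (h2 : theta τ (η + u + (z₁ - z₂)) ≠ 0)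
    (h3 : theta τ (u + (z₁ - z₂)) ≠ 0) (h4 : theta τ (η + z₁) ≠ 0)
    (h5 : theta τ (η + z₂) ≠ 0) (h6 : theta τ (u + η) ≠ 0)
    (h7 : theta τ (u + (z₁ + η)) ≠ 0) :
    phi τ (η + u) (z₁ - z₂) * phi τ η z₂ * phi τ u η =
      phi τ u (z₁ - z₂) * phi τ η z₁ * phi τ u η +
        phi τ (-u) z₂ * phi τ u (z₁ + η) * phi τ η z₁ :=
  phi_three_factor_identity_general τ hτ u η z₁ z₂ hu hη hηu hz₁ hz₂ hz₁₂ h1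

end
end
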